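/- Both u₁(x,y) = x² + xy and u₂(x,y) = xy + 1 - y² satisfy the Heisenberg minimal surface equation on the open unit disk (at noncharacteristic points), and they agree on the unit circle: for all θ, u₁(cos θ, sin θ) = u₂(cos θ, sin θ) = cos²θ + sin θ cos θ. Yet u₁ ≠ u₂ on the open disk; hence the Dirichlet problem for the Heisenberg minimal surface equation does not have unique solutions. -/

import Mathlib

open MeasureTheory Real Filter

/-- `p = u_x - y`, the X-derivative of `F(x,y,z) = u(x,y) - z`. -/
noncomputable def pA (u : ℝ × ℝ → ℝ) (z : ℝ × ℝ) : ℝ :=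
  deriv (fun x => u (x, z.2)) z.1 - z.2

/-- `q = u_y + x`, the Y-derivative of `F(x,y,z) = u(x,y) - z`. -/
noncomputable def qA (u : ℝ × ℝ → ℝ) (z : ℝ × ℝ) : ℝ :=
  deriv (fun y => u (z.1, y)) z.2 + z.1

/-- first component of the horizontal Gauss map -/
noncomputable def nh1 (u : ℝ × ℝ → ℝ) (z : ℝ × ℝ) : ℝ :=
  pA u z / Real.sqrt ((pA u z) ^ 2 + (qA u z) ^ 2)

/-- second component of the horizontal Gauss map -/
noncomputable def nh2 (u : ℝ × ℝ → ℝ) (z : ℝ × ℝ) : ℝ :=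
  qA u z / Real.sqrt ((pA u z) ^ 2 + (qA u z) ^ 2)

/-- the Heisenberg minimal surface operator: planar divergence of the horizontal Gauss map -/
noncomputable def msOp (u : ℝ × ℝ → ℝ) (z : ℝ × ℝ) : ℝ :=
  deriv (fun x => nh1 u (x, z.2)) z.1 + deriv (fun y => nh2 u (z.1, y)) z.2

/-! Both graphs have horizontal gradient `(p, q)` on a fixed line through the origin:
`(p, q) = 2x • (1, 1)` for `u₁` and `(p, q) = (2x - 2y) • (0, 1)` for `u₂`. Away from the
characteristic set the scalar factor keeps its sign locally, so the horizontal Gauss map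
`(p, q) / |(p, q)|` is locally constant and its divergence vanishes. On the circle the two
functions agree because `sin² θ + cos² θ = 1`, while `u₁ (0, 0) = 0 ≠ 1 = u₂ (0, 0)`. -/

open Topology

lemma mul_div_sqrt_mul_sq_add_mul_sq (t a b : ℝ) :
    t * a / √((t * a) ^ 2 + (t * b) ^ 2) = SignType.sign t * (a / √(a ^ 2 + b ^ 2)) := by
  rcases eq_or_ne t 0 with rfl | ht
  · simp
  have hsqrt : √((t * a) ^ 2 + (t * b) ^ 2) = |t| * √(a ^ 2 + b ^ 2) := by
    rw [← Real.sqrt_sq_eq_abs, ← Real.sqrt_mul (sq_nonneg t)]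
    ring_nf
  rw [hsqrt, mul_div_mul_comm]
  congr 1
  nth_rw 1 [← sign_mul_abs t]
  exact mul_div_cancel_right₀ _ (abs_ne_zero.mpr ht)

lemma eventually_sign_eq {X : Type*} [TopologicalSpace X] {t : X → ℝ} {z : X}
    (ht : ContinuousAt t z) (hz : t z ≠ 0) :
    ∀ᶠ w in 𝓝 z, SignType.sign (t w) = SignType.sign (t z) :=
  tendsto_pure.mp (by simpa [nhds_discrete] using ((continuousAt_sign_of_ne_zero hz).comp ht).tendsto)

lemma msOp_eq_zero_of_eventually_nh_eq {u : ℝ × ℝ → ℝ} {z : ℝ × ℝ} {c₁ c₂ : ℝ}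
    (h : ∀ᶠ w in 𝓝 z, nh1 u w = c₁ ∧ nh2 u w = c₂) : msOp u z = 0 := by
  have h₁ : (fun x => nh1 u (x, z.2)) =ᶠ[𝓝 z.1] fun _ => c₁ :=
    ((continuous_id.prodMk continuous_const).tendsto' _ _ rfl).eventually (h.mono fun _ => And.left)
  have h₂ : (fun y => nh2 u (z.1, y)) =ᶠ[𝓝 z.2] fun _ => c₂ :=
    ((continuous_const.prodMk continuous_id).tendsto' _ _ rfl).eventually (h.mono fun _ => And.right)
  rw [msOp, h₁.deriv_eq, h₂.deriv_eq, deriv_const, deriv_const, add_zero]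

theorem msOp_eq_zero_of_pA_qA_eq_mul {u t : ℝ × ℝ → ℝ} {a b : ℝ}
    (hp : ∀ w, pA u w = t w * a) (hq : ∀ w, qA u w = t w * b) {z : ℝ × ℝ}
    (ht : ContinuousAt t z) (hz : pA u z ^ 2 + qA u z ^ 2 ≠ 0) : msOp u z = 0 := by
  have htz : t z ≠ 0 := by
    rintro h
    simp [hp, hq, h] at hz
  refine msOp_eq_zero_of_eventually_nh_eq (c₁ := SignType.sign (t z) * (a / √(a ^ 2 + b ^ 2)))
    (c₂ := SignType.sign (t z) * (b / √(b ^ 2 + a ^ 2))) ?_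
  filter_upwards [eventually_sign_eq ht htz] with w hw
  rw [nh1, nh2, hp, hq, add_comm ((t w * a) ^ 2), mul_div_sqrt_mul_sq_add_mul_sq,
    add_comm ((t w * b) ^ 2), mul_div_sqrt_mul_sq_add_mul_sq, hw]
  exact ⟨rfl, rfl⟩

lemma qA_eq_of_hasDerivAt {u : ℝ × ℝ → ℝ} {z : ℝ × ℝ} {d : ℝ}
    (h : HasDerivAt (fun y => u (z.1, y)) d z.2) : qA u z = d + z.1 := by
  rw [qA, h.deriv]

lemma pA_sq_add_mul (z : ℝ × ℝ) : pA (fun w => w.1 ^ 2 + w.1 * w.2) z = 2 * z.1 := by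
  simp [pA]

lemma qA_sq_add_mul (z : ℝ × ℝ) : qA (fun w => w.1 ^ 2 + w.1 * w.2) z = 2 * z.1 := by
  simp only [qA, deriv_const_add', deriv_const_mul_id']
  ring

lemma pA_mul_add_one_sub_sq (z : ℝ × ℝ) : pA (fun w => w.1 * w.2 + 1 - w.2 ^ 2) z = 0 := by
  simp [pA]

lemma qA_mul_add_one_sub_sq (z : ℝ × ℝ) :
    qA (fun w => w.1 * w.2 + 1 - w.2 ^ 2) z = 2 * z.1 - 2 * z.2 := by
  rw [qA_eq_of_hasDerivAt
    ((((hasDerivAt_id z.2).const_mul z.1).add_const 1).sub (hasDerivAt_pow 2 z.2))]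
  simp only [mul_one, Nat.cast_ofNat, Nat.add_one_sub_one, pow_one]
  ring


/-- Non-uniqueness for the Dirichlet problem: `u₁ = x² + xy` and
`u₂ = xy + 1 - y²` both satisfy the minimal surface equation on the open unit
disk, agree on the unit circle, but differ inside the disk. -/
theorem dirichlet_nonuniqueness :
    (∀ z ∈ {w : ℝ × ℝ | w.1 ^ 2 + w.2 ^ 2 < 1},
      (pA (fun w => w.1 ^ 2 + w.1 * w.2) z) ^ 2 +
        (qA (fun w => w.1 ^ 2 + w.1 * w.2) z) ^ 2 ≠ 0 →
        msOp (fun w => w.1 ^ 2 + w.1 * w.2) z = 0) ∧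
    (∀ z ∈ {w : ℝ × ℝ | w.1 ^ 2 + w.2 ^ 2 < 1},
      (pA (fun w => w.1 * w.2 + 1 - w.2 ^ 2) z) ^ 2 +
        (qA (fun w => w.1 * w.2 + 1 - w.2 ^ 2) z) ^ 2 ≠ 0 →
        msOp (fun w => w.1 * w.2 + 1 - w.2 ^ 2) z = 0) ∧
    (∀ θ : ℝ,
      (fun w : ℝ × ℝ => w.1 ^ 2 + w.1 * w.2) (Real.cos θ, Real.sin θ) =
        Real.cos θ ^ 2 + Real.sin θ * Real.cos θ ∧
      (fun w : ℝ × ℝ => w.1 * w.2 + 1 - w.2 ^ 2) (Real.cos θ, Real.sin θ) =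
        Real.cos θ ^ 2 + Real.sin θ * Real.cos θ) ∧
    (∃ z ∈ {w : ℝ × ℝ | w.1 ^ 2 + w.2 ^ 2 < 1},
      (fun w : ℝ × ℝ => w.1 ^ 2 + w.1 * w.2) z ≠
        (fun w : ℝ × ℝ => w.1 * w.2 + 1 - w.2 ^ 2) z) := by
  refine ⟨fun z _ hz => ?_, fun z _ hz => ?_, fun θ => ⟨by ring, ?_⟩,
    ⟨(0, 0), by norm_num, by norm_num⟩⟩
  · exact msOp_eq_zero_of_pA_qA_eq_mul (t := fun w => 2 * w.1)
      (fun w => by rw [pA_sq_add_mul, mul_one]) (fun w => by rw [qA_sq_add_mul, mul_one])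
      (by fun_prop) hz
  · exact msOp_eq_zero_of_pA_qA_eq_mul (t := fun w => 2 * w.1 - 2 * w.2)
      (fun w => by rw [pA_mul_add_one_sub_sq, mul_zero])
      (fun w => by rw [qA_mul_add_one_sub_sq, mul_one]) (by fun_prop) hz
  · linear_combination -sin_sq_add_cos_sq θ
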